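/- Assume the standing hypothesis (H) and that Γ satisfies the Weak Hexagon Axiom (WHA). Let S be a symplecton and let p, q ∈ G_𝒜(S) be collinear points with p^⊥ ∩ S = {p₁} and q^⊥ ∩ S = {q₁}. Then p₁ and q₁ are collinear (q₁ ∈ p₁^⊥). -/

import Mathlib

/-! Preliminaries: point-line spaces, parapolar spaces, Grassmann spaces,
half-spin geometries, and the standing hypothesis (H). -/

universe u v

variable {P : Type u}

/-- Two points are collinear if they are distinct and lie on a common line. -/
def Collin (L : Set (Set P)) (p q : P) : Prop :=
  p ≠ q ∧ ∃ l ∈ L, p ∈ l ∧ q ∈ l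

/-- `perp L p` is the set of points collinear with `p`, together with `p` itself. -/
def perp (L : Set (Set P)) (p : P) : Set P :=
  {q | q = p ∨ Collin L p q}

/-- The collinearity graph of a point-line space. -/
def collGraph (L : Set (Set P)) : SimpleGraph P where
  Adj := Collin L
  symm := by
    constructor
    rintro p q ⟨hne, l, hl, hp, hq⟩
    exact ⟨hne.symm, l, hl, hq, hp⟩
  loopless := by
    constructor
    rintro p ⟨hne, -⟩
    exact hne rfl

/-- Distance in the collinearity graph. -/
noncomputable def gdist (L : Set (Set P)) (p q : P) : ℕ :=
  (collGraph L).dist p q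

/-- A subspace: every line meeting it in at least two points is contained in it. -/
def IsSubspace (L : Set (Set P)) (X : Set P) : Prop :=
  ∀ l ∈ L, (X ∩ l).Nontrivial → l ⊆ X

/-- A singular subspace: a subspace whose points are pairwise collinear. -/
def IsSingular (L : Set (Set P)) (X : Set P) : Prop :=
  IsSubspace L X ∧ ∀ p ∈ X, ∀ q ∈ X, p = q ∨ Collin L p q

/-- `2`-convexity: for any two of its points at distance 2, every point collinear
with both lies in the set. -/
def Is2Convex (L : Set (Set P)) (X : Set P) : Prop :=
  ∀ p ∈ X, ∀ q ∈ X, gdist L p q = 2 →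
    ∀ r, Collin L p r → Collin L q r → r ∈ X

/-- There is a strictly increasing chain of `n + 1` nonempty singular subspaces
ending at `X`. -/
def HasRankChain (L : Set (Set P)) (X : Set P) (n : ℕ) : Prop :=
  ∃ c : Fin (n + 1) → Set P, StrictMono c ∧
    (∀ i, (c i).Nonempty ∧ IsSingular L (c i)) ∧ c (Fin.last n) = X

/-- Projective rank of a singular subspace: length of the longest chain of distinct
nonempty singular subspaces ending at `X`. -/
def HasProjRank (L : Set (Set P)) (X : Set P) (n : ℕ) : Prop :=
  HasRankChain L X n ∧ ¬ HasRankChain L X (n + 1)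

/-- A plane is a (nonempty) singular subspace of projective rank 2. -/
def IsPlane (L : Set (Set P)) (π : Set P) : Prop :=
  π.Nonempty ∧ IsSingular L π ∧ HasProjRank L π 2

/-- A maximal singular subspace of the whole space. -/
def IsMaxSingular (L : Set (Set P)) (M : Set P) : Prop :=
  M.Nonempty ∧ IsSingular L M ∧ ∀ X, IsSingular L X → M ⊆ X → X = M

/-- A maximal singular subspace of the subspace `S`. -/
def IsMaxSingularIn (L : Set (Set P)) (S M : Set P) : Prop :=
  M.Nonempty ∧ M ⊆ S ∧ IsSingular L M ∧
    ∀ X, IsSingular L X → X ⊆ S → M ⊆ X → X = M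

/-- Partial linearity: two distinct points lie on at most one common line. -/
def IsPartialLinear (L : Set (Set P)) : Prop :=
  ∀ l₁ ∈ L, ∀ l₂ ∈ L, (l₁ ∩ l₂ : Set P).Nontrivial → l₁ = l₂

/-- A gamma space: a partial linear space in which `p^⊥ ∩ l` is empty, a point,
or all of `l`, for every point `p` and line `l`. -/
def IsGammaSpace (L : Set (Set P)) : Prop :=
  IsPartialLinear L ∧
    ∀ p : P, ∀ l ∈ L, perp L p ∩ l = ∅ ∨ (∃ q, perp L p ∩ l = {q}) ∨ l ⊆ perp L p

/-- The subset `S` is a nondegenerate polar space of rank `n` (with respect to the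
lines of the ambient space contained in it): the one-or-all axiom holds, no point of
`S` is collinear with all other points of `S`, and its maximal singular subspaces
have projective rank `n - 1`. -/
def IsPolarSpaceOfRank (L : Set (Set P)) (S : Set P) (n : ℕ) : Prop :=
  (∀ p ∈ S, ∀ l ∈ L, l ⊆ S → p ∉ l →
      (∃! q, q ∈ l ∧ Collin L p q) ∨ ∀ q ∈ l, Collin L p q) ∧
  (∀ p ∈ S, ∃ q ∈ S, q ≠ p ∧ ¬ Collin L p q) ∧
  (∀ M, IsMaxSingularIn L S M → HasProjRank L M (n - 1))

/-- A parapolar space with line set `L` and family of symplecta `S`. -/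
structure IsParapolar (L S : Set (Set P)) : Prop where
  line_nontrivial : ∀ l ∈ L, (l : Set P).Nontrivial
  gamma : IsGammaSpace L
  connected : (collGraph L).Connected
  symp_subspace : ∀ s ∈ S, IsSubspace L s
  symp_convex : ∀ s ∈ S, Is2Convex L s
  symp_polar : ∀ s ∈ S, ∃ n, 2 ≤ n ∧ IsPolarSpaceOfRank L s n
  line_in_symp : ∀ l ∈ L, ∃ s ∈ S, l ⊆ s
  quad_in_symp : ∀ p₁ p₂ p₃ p₄ : P,
    Collin L p₁ p₂ → Collin L p₂ p₃ → Collin L p₃ p₄ → Collin L p₄ p₁ →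
    ¬ Collin L p₁ p₃ → ¬ Collin L p₂ p₄ → p₁ ≠ p₃ → p₂ ≠ p₄ →
    ∃! s, s ∈ S ∧ p₁ ∈ s ∧ p₂ ∈ s ∧ p₃ ∈ s ∧ p₄ ∈ s

/-- A strong parapolar space: every pair of points at distance 2 lies in a symplecton. -/
def IsStrongParapolar (L S : Set (Set P)) : Prop :=
  IsParapolar L S ∧ ∀ p q : P, gdist L p q = 2 → ∃ s ∈ S, p ∈ s ∧ q ∈ s

/-- A polar pair: two points at distance 2 with at least two common neighbours. -/
def PolarPair (L : Set (Set P)) (p q : P) : Prop :=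
  gdist L p q = 2 ∧ (perp L p ∩ perp L q).Nontrivial

/-- An isomorphism of point-line spaces: a bijection of the point sets mapping
lines bijectively onto lines. -/
structure PLIso (P₁ : Type u) (L₁ : Set (Set P₁)) (P₂ : Type v) (L₂ : Set (Set P₂)) where
  toEquiv : P₁ ≃ P₂
  line_iff : ∀ s : Set P₁, s ∈ L₁ ↔ toEquiv '' s ∈ L₂

/-- Points of the residue of `p`: the lines through `p`. -/
def ResPoint (L : Set (Set P)) (p : P) : Type u := {l : Set P // l ∈ L ∧ p ∈ l}

/-- Lines of the residue of `p`: the pencils of lines through `p` inside a plane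
through `p`. -/
def ResLines (L : Set (Set P)) (p : P) : Set (Set (ResPoint L p)) :=
  {s | ∃ π : Set P, IsPlane L π ∧ p ∈ π ∧ s = {l : ResPoint L p | l.1 ⊆ π}}

section Grassmann

variable (K : Type*) (V : Type*) [DivisionRing K] [AddCommGroup V] [Module K V]

/-- Points of the Grassmann space `A_{7,4}(K)`: `4`-dimensional subspaces of `V`. -/
def GrassPoint : Type _ := {W : Submodule K V // Module.finrank K ↥W = 4}

/-- Lines of the Grassmann space `A_{7,4}(K)`: the sets `{W : U₃ < W < U₅}` for
flags `U₃ < U₅` of subspaces of dimensions 3 and 5. -/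
def GrassLines : Set (Set (GrassPoint K V)) :=
  {s | ∃ U₃ U₅ : Submodule K V, Module.finrank K ↥U₃ = 3 ∧ Module.finrank K ↥U₅ = 5 ∧
    U₃ < U₅ ∧ s = {W : GrassPoint K V | U₃ < W.1 ∧ W.1 < U₅}}

/-- The star of a 3-dimensional subspace `U`. -/
def GrassStar (U : Submodule K V) : Set (GrassPoint K V) := {W | U < W.1}

/-- The top of a 5-dimensional subspace `Y`. -/
def GrassTop (Y : Submodule K V) : Set (GrassPoint K V) := {W | W.1 < Y}

/-- The symplecton determined by a flag `U₂ < U₆`. -/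
def GrassSymp (U₂ U₆ : Submodule K V) : Set (GrassPoint K V) := {W | U₂ < W.1 ∧ W.1 < U₆}

/-- The family of symplecta of the Grassmann space `A_{7,4}(K)`. -/
def GrassSymps : Set (Set (GrassPoint K V)) :=
  {s | ∃ U₂ U₆ : Submodule K V, Module.finrank K ↥U₂ = 2 ∧ Module.finrank K ↥U₆ = 6 ∧
    U₂ < U₆ ∧ s = GrassSymp K V U₂ U₆}

end Grassmann

/-- The data of a Grassmann space `A_{7,4}(K)`: a division ring `K` and an
8-dimensional `K`-vector space. -/
structure A74Data : Type 1 where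
  K : Type
  V : Type
  [instK : DivisionRing K]
  [instV : AddCommGroup V]
  [instM : Module K V]
  dim8 : Module.finrank K V = 8

attribute [instance] A74Data.instK A74Data.instV A74Data.instM

/-- A point-line space is locally of type `A_{7,4}` if every point residue is
isomorphic to a Grassmann space `A_{7,4}(K)` for some division ring `K`. -/
def LocallyA74 (L : Set (Set P)) : Prop :=
  ∀ p : P, ∃ D : A74Data,
    Nonempty (PLIso (ResPoint L p) (ResLines L p) (GrassPoint D.K D.V) (GrassLines D.K D.V))

/-- The Weak Hexagon Axiom. -/
def WHA (L : Set (Set P)) : Prop :=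
  ∀ p : Fin 6 → P, Function.Injective p →
    (∀ i : Fin 6, Collin L (p i) (p (i + 1))) →
    (∀ i j : Fin 6, j ≠ i → j ≠ i + 1 → j ≠ i - 1 → ¬ Collin L (p i) (p j)) →
    PolarPair L (p 0) (p 2) →
    ∃ w, w ∈ perp L (p 0) ∧ w ∈ perp L (p 2) ∧ w ∈ perp L (p 4)

/-- The standing hypothesis (H): a parapolar space locally of type `A_{7,4}` whose
maximal singular subspaces (of rank 5) are partitioned into two families `A` and `B`
with the prescribed intersection behaviour, every plane lying in exactly one member
of each family, and whose symplecta are polar spaces of rank 4. -/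
structure HypH (P : Type u) where
  L : Set (Set P)
  S : Set (Set P)
  A : Set (Set P)
  B : Set (Set P)
  parapolar : IsParapolar L S
  locally74 : LocallyA74 L
  A_max : ∀ M ∈ A, IsMaxSingular L M
  B_max : ∀ M ∈ B, IsMaxSingular L M
  max_mem : ∀ M, IsMaxSingular L M → M ∈ A ∪ B
  AB_disj : Disjoint A B
  max_rank5 : ∀ M, IsMaxSingular L M → HasProjRank L M 5
  interAA : ∀ M₁ ∈ A, ∀ M₂ ∈ A, M₁ ≠ M₂ →
    M₁ ∩ M₂ = ∅ ∨ (∃ x, M₁ ∩ M₂ = {x}) ∨ M₁ ∩ M₂ ∈ L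
  interBB : ∀ M₁ ∈ B, ∀ M₂ ∈ B, M₁ ≠ M₂ →
    M₁ ∩ M₂ = ∅ ∨ (∃ x, M₁ ∩ M₂ = {x}) ∨ M₁ ∩ M₂ ∈ L
  interAB : ∀ M₁ ∈ A, ∀ M₂ ∈ B,
    M₁ ∩ M₂ = ∅ ∨ (∃ x, M₁ ∩ M₂ = {x}) ∨ IsPlane L (M₁ ∩ M₂)
  planeA : ∀ π, IsPlane L π → ∃! M, M ∈ A ∧ π ⊆ M
  planeB : ∀ π, IsPlane L π → ∃! M, M ∈ B ∧ π ⊆ M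
  symp_rank4 : ∀ s ∈ S, IsPolarSpaceOfRank L s 4

/-- `𝒳(S)`: members `M` of the family `X` for which `M ∩ S` is a maximal singular
subspace of `S`. -/
def famS (L X : Set (Set P)) (s : Set P) : Set (Set P) :=
  {M | M ∈ X ∧ IsMaxSingularIn L s (M ∩ s)}

/-- `M_𝒳(S) = {M ∩ S : M ∈ 𝒳(S)}`. -/
def MX (L X : Set (Set P)) (s : Set P) : Set (Set P) :=
  (fun M => M ∩ s) '' famS L X s

/-- `N_𝒳(S) = {p ∉ S : p^⊥ ∩ S ∈ M_𝒳(S)}`. -/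
def NX (L X : Set (Set P)) (s : Set P) : Set P :=
  {p | p ∉ s ∧ perp L p ∩ s ∈ MX L X s}

/-- `G_𝒳(S)`: points `p ∉ S` with `p^⊥ ∩ S = {q}` a single point, `{p, r}` polar
for every `r ∈ (q^⊥ ∩ S) \ {q}`, and `p^⊥ ∩ M` a plane for some `M ∈ 𝒳_q ∩ 𝒳(S)`. -/
def GX (L X : Set (Set P)) (s : Set P) : Set P :=
  {p | p ∉ s ∧ ∃ q, perp L p ∩ s = {q} ∧
    (∀ r ∈ perp L q ∩ s, r ≠ q → PolarPair L p r) ∧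
    ∃ M, M ∈ X ∧ q ∈ M ∧ M ∈ famS L X s ∧ IsPlane L (perp L p ∩ M)}

/-- `D_𝒳(S) = S ∪ N_𝒳(S) ∪ G_𝒳(S)`. -/
def DX (L X : Set (Set P)) (s : Set P) : Set P :=
  s ∪ NX L X s ∪ GX L X s

/-- Restriction of a family of sets of points to a subset `D` (viewed inside the
subtype `↥D`): the members of the family entirely contained in `D`. -/
def restrictFam (F : Set (Set P)) (D : Set P) : Set (Set ↥D) :=
  {l | ∃ l₀ ∈ F, l₀ ⊆ D ∧ l = Subtype.val ⁻¹' l₀}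

/-- A subspace of a quadratic space is totally singular if the form vanishes on it. -/
def TotallySingular {F : Type*} {V : Type*} [CommRing F] [AddCommGroup V] [Module F V]
    (Q : QuadraticForm F V) (W : Submodule F V) : Prop :=
  ∀ x ∈ W, Q x = 0

/-- The data of a half-spin geometry `D_{6,6}`: a field `F`, a 12-dimensional
`F`-vector space with a nondegenerate quadratic form of Witt index 6, together with
a chosen maximal totally singular subspace `W₀` determining one of the two classes. -/
structure HalfSpinData : Type 1 where
  F : Type
  V : Type
  [instF : Field F]
  [instV : AddCommGroup V]
  [instM : Module F V]
  Q : QuadraticForm F V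
  dim12 : Module.finrank F V = 12
  nondeg : LinearMap.BilinForm.Nondegenerate (QuadraticMap.polarBilin Q)
  witt_ex : ∃ W : Submodule F V, TotallySingular Q W ∧ Module.finrank F ↥W = 6
  witt_max : ∀ W : Submodule F V, TotallySingular Q W → Module.finrank F ↥W ≤ 6
  W₀ : Submodule F V
  W₀_sing : TotallySingular Q W₀
  W₀_dim : Module.finrank F ↥W₀ = 6

attribute [instance] HalfSpinData.instF HalfSpinData.instV HalfSpinData.instM

/-- Points of the half-spin geometry: totally singular 6-dimensional subspaces in
the class of `W₀` (same class iff the codimension of the intersection is even). -/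
def HalfSpinData.Points (D : HalfSpinData) : Type :=
  {W : Submodule D.F D.V // TotallySingular D.Q W ∧ Module.finrank D.F ↥W = 6 ∧
    Even (6 - Module.finrank D.F ↥(W ⊓ D.W₀))}

/-- Lines of the half-spin geometry: for each totally singular 3-dimensional
subspace `T`, the set of all points containing `T`. -/
def HalfSpinData.Lines (D : HalfSpinData) : Set (Set D.Points) :=
  {s | ∃ T : Submodule D.F D.V, TotallySingular D.Q T ∧ Module.finrank D.F ↥T = 3 ∧
    s = {W : D.Points | T ≤ W.1}}

/-- A point-line space is of type `D_{6,6}` if it is isomorphic to a half-spin geometry. -/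
def IsD66 (P' : Type v) (L' : Set (Set P')) : Prop :=
  ∃ D : HalfSpinData, Nonempty (PLIso P' L' D.Points D.Lines)
/-! Suppose `q₁ ∉ p₁^⊥`. Every point of the rank-4 polar space `S` lies on a line of `S` with at
least three points (a plane through a point `x` contains at least three lines through `x`, as the
residue of `x` is a Grassmann space), and this yields an induced path `p₁ ~ r ~ r' ~ q₁` in `S`.
Then `p, p₁, r, r', q₁, q` is an isometrically embedded hexagon in which `{p, r}` is polar because
`p ∈ G_𝒜(S)`, so the Weak Hexagon Axiom gives a point `w` collinear with `p`, `r` and `q₁`.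
By 2-convexity of `S` the point `w` lies in `S`, hence `w = p₁`, and `q₁ ∈ p₁^⊥` after all. -/

section

variable {L : Set (Set P)}

theorem mem_perp {p q : P} : q ∈ perp L p ↔ q = p ∨ Collin L p q := Iff.rfl

theorem Collin.ne {p q : P} (h : Collin L p q) : p ≠ q := h.1

theorem Collin.symm {p q : P} (h : Collin L p q) : Collin L q p :=
  (collGraph L).adj_symm h

theorem Collin.mem_perp {p q : P} (h : Collin L p q) : q ∈ perp L p := Or.inr h

theorem mem_perp_comm {p q : P} : q ∈ perp L p ↔ p ∈ perp L q := by
  simp only [mem_perp]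
  exact ⟨Or.imp Eq.symm Collin.symm, Or.imp Eq.symm Collin.symm⟩

theorem collin_of_mem_perp {p q : P} (h : q ∈ perp L p) (hne : p ≠ q) : Collin L p q :=
  h.resolve_left hne.symm

theorem not_collin_of_not_mem_perp {p q : P} (h : q ∉ perp L p) : ¬ Collin L p q :=
  fun hc => h hc.mem_perp

theorem ne_of_not_mem_perp {p q : P} (h : q ∉ perp L p) : q ≠ p := fun hqp => h (Or.inl hqp)

theorem not_mem_perp_of_perp_inter_eq {s : Set P} {p p₁ x : P} (hp : perp L p ∩ s = {p₁})
    (hx : x ∈ s) (hxp₁ : x ≠ p₁) : x ∉ perp L p :=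
  fun h => hxp₁ (hp.subset ⟨h, hx⟩)

theorem mem_perp_of_mem_line {l : Set P} (hl : l ∈ L) {p q : P} (hp : p ∈ l) (hq : q ∈ l) :
    q ∈ perp L p := by
  rcases eq_or_ne q p with rfl | hne
  · exact Or.inl rfl
  · exact Or.inr ⟨hne.symm, l, hl, hp, hq⟩

theorem IsSubspace.exists_line {X : Set P} (hX : IsSubspace L X) {p q : P} (hp : p ∈ X)
    (hq : q ∈ X) (hpq : Collin L p q) : ∃ l ∈ L, l ⊆ X ∧ p ∈ l ∧ q ∈ l := by
  obtain ⟨hne, l, hl, hpl, hql⟩ := hpq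
  exact ⟨l, hl, hX l hl ⟨p, ⟨hp, hpl⟩, q, ⟨hq, hql⟩, hne⟩, hpl, hql⟩

theorem gdist_eq_two {p q r : P} (hpq : q ∉ perp L p) (hpr : Collin L p r) (hrq : Collin L r q) :
    gdist L p q = 2 := by
  let hwalk : (collGraph L).Walk p q := .cons hpr (.cons hrq .nil)
  have hle : gdist L p q ≤ 2 := SimpleGraph.dist_le hwalk
  have h0 : gdist L p q ≠ 0 := fun h =>
    hpq (Or.inl ((SimpleGraph.Reachable.dist_eq_zero_iff ⟨hwalk⟩).1 h).symm)
  have h1 : gdist L p q ≠ 1 := fun h =>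
    hpq (Or.inr (SimpleGraph.dist_eq_one_iff_adj.1 h))
  omega

theorem Is2Convex.mem_of_mem_perp {X : Set P} (hX : Is2Convex L X) {p q r : P} (hp : p ∈ X)
    (hq : q ∈ X) (hpq : q ∉ perp L p) (hrp : r ∈ perp L p) (hrq : r ∈ perp L q) : r ∈ X := by
  rcases hrp with rfl | hpr
  · exact hp
  rcases hrq with rfl | hqr
  · exact hq
  exact hX p hp q hq (gdist_eq_two hpq hpr hqr.symm) r hpr hqr

namespace IsPolarSpaceOfRank

variable {s : Set P} {n : ℕ}

theorem exists_mem_perp (hpol : IsPolarSpaceOfRank L s n) {c : P} (hc : c ∈ s) {l : Set P}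
    (hl : l ∈ L) (hls : l ⊆ s) {y : P} (hy : y ∈ l) : ∃ u ∈ l, u ∈ perp L c := by
  by_cases hcl : c ∈ l
  · exact ⟨c, hcl, Or.inl rfl⟩
  rcases hpol.1 c hc l hl hls hcl with ⟨u, ⟨hul, hcu⟩, -⟩ | hall
  · exact ⟨u, hul, hcu.mem_perp⟩
  · exact ⟨y, hy, (hall y hy).mem_perp⟩

theorem subset_perp (hpol : IsPolarSpaceOfRank L s n) {c : P} (hc : c ∈ s) {l : Set P}
    (hl : l ∈ L) (hls : l ⊆ s) {u v : P} (hu : u ∈ l) (hv : v ∈ l) (huv : u ≠ v)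
    (hcu : u ∈ perp L c) (hcv : v ∈ perp L c) : l ⊆ perp L c := by
  by_cases hcl : c ∈ l
  · exact fun y hy => mem_perp_of_mem_line hl hcl hy
  have hcu' : Collin L c u := collin_of_mem_perp hcu fun h => hcl (h ▸ hu)
  have hcv' : Collin L c v := collin_of_mem_perp hcv fun h => hcl (h ▸ hv)
  rcases hpol.1 c hc l hl hls hcl with ⟨w, -, huniq⟩ | hall
  · exact absurd ((huniq u ⟨hu, hcu'⟩).trans (huniq v ⟨hv, hcv'⟩).symm) huv
  · exact fun y hy => (hall y hy).mem_perp

theorem perp_inter_subset_perp (hpol : IsPolarSpaceOfRank L s n) (hsub : IsSubspace L s)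
    {x y w : P} (hx : x ∈ s) (hy : y ∈ s) (hw : w ∈ s) (hxy : y ∉ perp L x)
    (hxw : x ∈ perp L w) (h : perp L x ∩ perp L y ∩ s ⊆ perp L w) :
    perp L x ∩ s ⊆ perp L w := by
  rintro t ⟨htx, hts⟩
  by_contra htw
  have hxt : Collin L x t := collin_of_mem_perp htx fun h => htw (h ▸ hxw)
  obtain ⟨m, hm, hms, hxm, htm⟩ := hsub.exists_line hx hts hxt
  obtain ⟨u, hum, huy⟩ := hpol.exists_mem_perp hy hm hms hxm
  have hxu : x ≠ u := fun h => hxy (mem_perp_comm.1 (h ▸ huy))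
  have huw : u ∈ perp L w := h ⟨⟨mem_perp_of_mem_line hm hxm hum, huy⟩, hms hum⟩
  exact htw (hpol.subset_perp hw hm hms hxm hum hxu hxw huw htm)

theorem exists_mem_perp_inter_not_mem_perp (hpol : IsPolarSpaceOfRank L s n)
    (hsub : IsSubspace L s) {x y w : P} (hx : x ∈ s) (hy : y ∈ s) (hw : w ∈ s)
    (hxy : y ∉ perp L x) (hxw : w ∈ perp L x) (hyw : w ∈ perp L y) :
    ∃ w' ∈ s, w' ∈ perp L x ∧ w' ∈ perp L y ∧ w' ∉ perp L w := by
  -- Otherwise all of `x^⊥` lies in `w^⊥`. Project a point `t ∉ w^⊥` to `z` on the line `yw`, then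
  -- `x` to `v` on the line `tz`: as `z ∉ x^⊥`, the line `tz` would meet `w^⊥` in `z` and `v`.
  by_contra! hcon
  have hxsub : perp L x ∩ s ⊆ perp L w :=
    hpol.perp_inter_subset_perp hsub hx hy hw hxy (mem_perp_comm.1 hxw)
      fun u ⟨⟨hux, huy⟩, hus⟩ => hcon u hus hux huy
  obtain ⟨t, hts, htw, hwt⟩ := hpol.2.1 w hw
  have htw' : t ∉ perp L w := fun h => h.elim htw hwt
  have htx : t ∉ perp L x := fun h => htw' (hxsub ⟨h, hts⟩)
  have hyw' : Collin L y w := collin_of_mem_perp hyw fun h => hxy (h ▸ hxw)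
  obtain ⟨m, hm, hms, hym, hwm⟩ := hsub.exists_line hy hw hyw'
  obtain ⟨z, hzm, hzt⟩ := hpol.exists_mem_perp hts hm hms hym
  have hwz : w ≠ z := fun h => htw' (mem_perp_comm.1 (h ▸ hzt))
  have hzx : z ∉ perp L x := fun h => hxy (hpol.subset_perp hx hm hms hwm hzm hwz hxw h hym)
  have htz : Collin L t z :=
    collin_of_mem_perp hzt fun h => htw' (mem_perp_of_mem_line hm hwm (h ▸ hzm))
  obtain ⟨k, hk, hks, htk, hzk⟩ := hsub.exists_line hts (hms hzm) htz
  obtain ⟨v, hvk, hvx⟩ := hpol.exists_mem_perp hx hk hks htk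
  have hzv : z ≠ v := fun h => hzx (h ▸ hvx)
  exact htw' (hpol.subset_perp hw hk hks hzk hvk hzv (mem_perp_of_mem_line hm hwm hzm)
    (hxsub ⟨hvx, hks hvk⟩) htk)

theorem exists_induced_path (hpol : IsPolarSpaceOfRank L s n) (hsub : IsSubspace L s)
    {l : Set P} {x y : P} (hl : l ∈ L) (hls : l ⊆ s) (hxl : x ∈ l)
    (hthick : (l \ {x}).Nontrivial) (hy : y ∈ s) (hxy : y ∉ perp L x) :
    ∃ r ∈ s, ∃ r' ∈ s, Collin L x r ∧ Collin L r r' ∧ Collin L r' y ∧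
      r' ∉ perp L x ∧ y ∉ perp L r := by
  -- `r ∈ l` avoids `x` and the projection `w` of `y` on `l`; `r'` is the projection of `r` on the
  -- line `yw'`, where `w' ∈ x^⊥ ∩ y^⊥` is not collinear with `w`.
  have hx := hls hxl
  obtain ⟨w, hwl, hwy⟩ := hpol.exists_mem_perp hy hl hls hxl
  obtain ⟨r, ⟨hrl, hrx⟩, hrw⟩ := hthick.exists_ne w
  have hyr : y ∉ perp L r := fun h => hxy <| mem_perp_comm.1 <|
    hpol.subset_perp hy hl hls hwl hrl (Ne.symm hrw) hwy (mem_perp_comm.1 h) hxl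
  obtain ⟨w', hw's, hw'x, hw'y, hw'w⟩ := hpol.exists_mem_perp_inter_not_mem_perp hsub hx hy
    (hls hwl) hxy (mem_perp_of_mem_line hl hxl hwl) hwy
  have hw'r : w' ∉ perp L r := fun h => hw'w <| mem_perp_comm.1 <|
    hpol.subset_perp hw's hl hls hxl hrl (Ne.symm hrx) (mem_perp_comm.1 hw'x)
      (mem_perp_comm.1 h) hwl
  have hyw' : Collin L y w' := collin_of_mem_perp hw'y fun h => hxy (h ▸ hw'x)
  obtain ⟨m, hm, hms, hym, hw'm⟩ := hsub.exists_line hy hw's hyw'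
  obtain ⟨r', hr'm, hr'r⟩ := hpol.exists_mem_perp (hls hrl) hm hms hym
  have hr'x : r' ∉ perp L x := fun h =>
    hxy (hpol.subset_perp hx hm hms hw'm hr'm (fun h' => hw'r (h' ▸ hr'r)) hw'x h hym)
  refine ⟨r, hls hrl, r', hms hr'm, ⟨Ne.symm hrx, l, hl, hxl, hrl⟩, collin_of_mem_perp hr'r ?_,
    collin_of_mem_perp (mem_perp_of_mem_line hm hr'm hym) ?_, hr'x, hyr⟩
  · exact fun h => hr'x (h ▸ mem_perp_of_mem_line hl hxl hrl)
  · exact fun h => hyr (h ▸ hr'r)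

end IsPolarSpaceOfRank

theorem Set.Nonempty.nontrivial_of_ssubset {α : Type*} {A B : Set α} (hA : A.Nonempty)
    (hAB : A ⊂ B) : B.Nontrivial := by
  obtain ⟨x, hx⟩ := hA
  obtain ⟨y, hyB, hyA⟩ := Set.exists_of_ssubset hAB
  exact ⟨x, hAB.subset hx, y, hyB, fun h => hyA (h ▸ hx)⟩

theorem Set.Nontrivial.diff_singleton_of_ssubset {α : Type*} {B C : Set α} (hB : B.Nontrivial)
    (hBC : B ⊂ C) (a : α) : (C \ {a}).Nontrivial := by
  by_cases haB : a ∈ B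
  · obtain ⟨x, hxB, hxa⟩ := hB.exists_ne a
    obtain ⟨z, hzC, hzB⟩ := Set.exists_of_ssubset hBC
    exact ⟨x, ⟨hBC.subset hxB, hxa⟩, z, ⟨hzC, fun h => hzB (h ▸ haB)⟩, fun h => hzB (h ▸ hxB)⟩
  · exact hB.mono fun y hy => ⟨hBC.subset hy, fun h => haB (h ▸ hy)⟩

theorem isSingular_singleton (p : P) : IsSingular L {p} :=
  ⟨fun _ _ ⟨_, hx, _, hy, hxy⟩ => absurd (hx.1.trans hy.1.symm) hxy,
    fun _ hx _ hy => Or.inl (hx.trans hy.symm)⟩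

theorem IsPartialLinear.isSingular_of_mem (hlin : IsPartialLinear L) {l : Set P} (hl : l ∈ L) :
    IsSingular L l := by
  refine ⟨fun l' hl' h => (hlin l' hl' l hl (by rwa [Set.inter_comm])).le, fun x hx y hy => ?_⟩
  rcases eq_or_ne x y with hxy | hxy
  · exact Or.inl hxy
  · exact Or.inr ⟨hxy, l, hl, hx, hy⟩

theorem isSingular_sUnion {c : Set (Set P)} (hc : DirectedOn (· ⊆ ·) c)
    (h : ∀ X ∈ c, IsSingular L X) : IsSingular L (⋃₀ c) := by
  have hpair : ∀ x ∈ ⋃₀ c, ∀ y ∈ ⋃₀ c, ∃ X ∈ c, x ∈ X ∧ y ∈ X := by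
    rintro x ⟨X, hX, hxX⟩ y ⟨Y, hY, hyY⟩
    obtain ⟨Z, hZ, hXZ, hYZ⟩ := hc X hX Y hY
    exact ⟨Z, hZ, hXZ hxX, hYZ hyY⟩
  refine ⟨fun l hl ⟨x, ⟨hx, hxl⟩, y, ⟨hy, hyl⟩, hxy⟩ => ?_, fun x hx y hy => ?_⟩
  · obtain ⟨Z, hZ, hxZ, hyZ⟩ := hpair x hx y hy
    exact ((h Z hZ).1 l hl ⟨x, ⟨hxZ, hxl⟩, y, ⟨hyZ, hyl⟩, hxy⟩).trans
      (Set.subset_sUnion_of_mem hZ)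
  · obtain ⟨Z, hZ, hxZ, hyZ⟩ := hpair x hx y hy
    exact (h Z hZ).2 x hxZ y hyZ

theorem exists_isMaxSingularIn {s : Set P} {a : P} (ha : a ∈ s) :
    ∃ M, IsMaxSingularIn L s M ∧ a ∈ M := by
  obtain ⟨M, haM, hmax⟩ := zorn_subset_nonempty {X : Set P | IsSingular L X ∧ X ⊆ s}
    (fun c hcS hc _ => ⟨⋃₀ c, ⟨isSingular_sUnion hc.directedOn fun X hX => (hcS hX).1,
      Set.sUnion_subset fun X hX => (hcS hX).2⟩, fun X hX => Set.subset_sUnion_of_mem hX⟩)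
    {a} ⟨isSingular_singleton a, Set.singleton_subset_iff.2 ha⟩
  exact ⟨M, ⟨⟨a, haM rfl⟩, hmax.1.2, hmax.1.1,
    fun X hX hXs hMX => hmax.eq_of_ge ⟨hX, hXs⟩ hMX⟩, haM rfl⟩

theorem HasRankChain.nontrivial_diff_singleton {X : Set P} {n : ℕ} (h : HasRankChain L X n)
    (hn : 2 ≤ n) (a : P) : (X \ {a}).Nontrivial := by
  obtain ⟨c, hc, hne, rfl⟩ := h
  have h01 : c ⟨0, by omega⟩ < c ⟨1, by omega⟩ := hc (by simp [Fin.lt_def])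
  have h12 : c ⟨1, by omega⟩ < c ⟨2, by omega⟩ := hc (by simp [Fin.lt_def])
  exact (((hne _).1.nontrivial_of_ssubset h01).diff_singleton_of_ssubset h12 a).mono
    (Set.sdiff_subset_sdiff_left (hc.monotone (Fin.le_last _)))

theorem IsPartialLinear.isPlane_insert (hlin : IsPartialLinear L) {l : Set P} (hl : l ∈ L)
    (hl2 : l.Nontrivial) {a : P} (hal : a ∉ l) (hsing : IsSingular L (insert a l)) :
    IsPlane L (insert a l) := by
  obtain ⟨x, hx⟩ := hl2.nonempty
  have hxl : {x} ⊂ l := (Set.singleton_subset_iff.2 hx).ssubset_of_ne hl2.ne_singleton.symm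
  refine ⟨Set.insert_nonempty a l, hsing, ⟨![{x}, l, insert a l], ?_, ?_, rfl⟩, ?_⟩
  · refine Fin.strictMono_iff_lt_succ.2 fun i => ?_
    fin_cases i
    exacts [hxl, Set.ssubset_insert hal]
  · intro i
    fin_cases i
    exacts [⟨⟨x, rfl⟩, isSingular_singleton x⟩, ⟨⟨x, hx⟩, hlin.isSingular_of_mem hl⟩,
      ⟨Set.insert_nonempty a l, hsing⟩]
  · rintro ⟨c, hc, hne, hlast⟩
    have h0 : c 0 ⊂ c 1 := hc (by decide)
    have h1 : c 1 ⊂ c 2 := hc (by decide)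
    have h2 : c 2 ⊂ insert a l := hlast ▸ hc (show (2 : Fin 4) < Fin.last 3 by decide)
    have hc1 : (c 1).Nontrivial := (hne 0).1.nontrivial_of_ssubset h0
    have hlc2 : l ⊆ c 2 := (hne 2).2.1 l hl <| (hc1.diff_singleton_of_ssubset h1 a).mono
      fun y ⟨hy, hya⟩ => ⟨hy, (h2.subset hy).resolve_left hya⟩
    have hc2 : c 2 = l := by
      have ha2 : a ∉ c 2 := fun ha => h2.2 (Set.insert_subset ha hlc2)
      exact subset_antisymm (fun y hy => (h2.subset hy).resolve_left fun h => ha2 (h ▸ hy)) hlc2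
    exact h1.2 (hc2 ▸ (hne 1).2.1 l hl (hc1.mono fun y hy => ⟨hy, hc2 ▸ h1.subset hy⟩))

theorem Set.two_lt_encard_of_mem {α : Type*} {s : Set α} {x y z : α} (hx : x ∈ s) (hy : y ∈ s)
    (hz : z ∈ s) (hxy : x ≠ y) (hxz : x ≠ z) (hyz : y ≠ z) : 2 < s.encard := by
  have h3 : ({x, y, z} : Set α).encard = 3 := Set.encard_eq_three.2 ⟨x, y, z, hxy, hxz, hyz, rfl⟩
  calc (2 : ℕ∞) < 3 := by norm_num
    _ = ({x, y, z} : Set α).encard := h3.symm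
    _ ≤ s.encard := Set.encard_le_encard (by simp [Set.insert_subset_iff, hx, hy, hz])

theorem two_lt_encard_of_mem_grassLines {K V : Type*} [DivisionRing K] [AddCommGroup V]
    [Module K V] [FiniteDimensional K V] {ℓ : Set (GrassPoint K V)} (hℓ : ℓ ∈ GrassLines K V) :
    2 < ℓ.encard := by
  obtain ⟨U₃, U₅, h3, h5, hlt, rfl⟩ := hℓ
  set W : V → Submodule K V := fun v => U₃ ⊔ K ∙ v
  have hvW : ∀ v, v ∈ W v := fun v => Submodule.mem_sup_right (Submodule.mem_span_singleton_self v)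
  have hrk : ∀ v, v ∉ U₃ → Module.finrank K (W v) = 4 := fun v hv => by
    rw [Submodule.finrank_sup_span_singleton hv, h3]
  have hmem : ∀ v ∈ U₅, v ∉ U₃ → U₃ < W v ∧ W v < U₅ := fun v hv5 hv3 =>
    ⟨SetLike.lt_iff_le_and_exists.2 ⟨le_sup_left, v, hvW v, hv3⟩,
      lt_of_le_of_ne (sup_le hlt.le ((Submodule.span_singleton_le_iff_mem _ _).2 hv5))
        fun h => by have := hrk v hv3; rw [h, h5] at this; omega⟩
  obtain ⟨v₁, hv₁5, hv₁3⟩ := SetLike.exists_of_lt hlt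
  obtain ⟨v₂, hv₂5, hv₂1⟩ := SetLike.exists_of_lt (hmem v₁ hv₁5 hv₁3).2
  have hv₂3 : v₂ ∉ U₃ := fun h => hv₂1 (Submodule.mem_sup_left h)
  have hv₁2 : v₁ ∉ W v₂ := fun h => hv₂1 <| by
    have hW : W v₁ = W v₂ := Submodule.eq_of_le_of_finrank_eq
      (sup_le le_sup_left ((Submodule.span_singleton_le_iff_mem _ _).2 h))
      ((hrk v₁ hv₁3).trans (hrk v₂ hv₂3).symm)
    exact hW ▸ hvW v₂
  have hsub : ∀ {u v : V}, u + v ∈ W u → v ∈ W u := fun {u v} h => by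
    simpa using (W u).sub_mem h (hvW u)
  have hv₁₂3 : v₁ + v₂ ∉ U₃ := fun h => hv₂1 (hsub (Submodule.mem_sup_left h))
  refine Set.two_lt_encard_of_mem (x := ⟨W v₁, hrk v₁ hv₁3⟩) (y := ⟨W v₂, hrk v₂ hv₂3⟩)
    (z := ⟨W (v₁ + v₂), hrk _ hv₁₂3⟩) (hmem v₁ hv₁5 hv₁3) (hmem v₂ hv₂5 hv₂3)
    (hmem _ (U₅.add_mem hv₁5 hv₂5) hv₁₂3) (fun h => hv₂1 ?_) (fun h => hv₂1 ?_) (fun h => hv₁2 ?_)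
  · have h' : W v₁ = W v₂ := congrArg Subtype.val h
    exact h' ▸ hvW v₂
  · have h' : W v₁ = W (v₁ + v₂) := congrArg Subtype.val h
    exact hsub (h' ▸ hvW (v₁ + v₂))
  · have h' : W v₂ = W (v₂ + v₁) := add_comm v₁ v₂ ▸ congrArg Subtype.val h
    exact hsub (h' ▸ hvW (v₂ + v₁))

theorem IsPlane.two_lt_encard_lines (h74 : LocallyA74 L) {π : Set P} (hπ : IsPlane L π) {x : P}
    (hx : x ∈ π) : 2 < {l | l ∈ L ∧ x ∈ l ∧ l ⊆ π}.encard := by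
  obtain ⟨D, ⟨φ⟩⟩ := h74 x
  have : FiniteDimensional D.K D.V := Module.finite_of_finrank_pos (by rw [D.dim8]; norm_num)
  have hres : {l : ResPoint L x | l.1 ⊆ π} ∈ ResLines L x := ⟨π, hπ, hx, rfl⟩
  have h := two_lt_encard_of_mem_grassLines ((φ.line_iff _).1 hres)
  have hval : Function.Injective fun l : ResPoint L x => l.1 := fun _ _ => Subtype.ext
  rw [φ.toEquiv.injective.encard_image, ← hval.encard_image] at h
  convert h using 2
  ext l
  constructor
  · rintro ⟨hl, hxl, hlπ⟩
    exact ⟨⟨l, hl, hxl⟩, hlπ, rfl⟩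
  · rintro ⟨l', hl'π, rfl⟩
    exact ⟨l'.2.1, l'.2.2, hl'π⟩

theorem IsPartialLinear.injOn_mem_of_subset_insert (hlin : IsPartialLinear L)
    (hL : ∀ l ∈ L, l.Nontrivial) {l : Set P} (hl : l ∈ L) {a x : P} (hal : a ∉ l) (hx : x ∈ l) :
    Set.InjOn (a ∈ ·) {l' | l' ∈ L ∧ x ∈ l' ∧ l' ⊆ insert a l} := by
  have hax : a ≠ x := fun h => hal (h ▸ hx)
  have heq : ∀ l' ∈ L, a ∉ l' → l' ⊆ insert a l → l' = l := fun l' hl' hal' hl'l =>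
    hlin l' hl' l hl <| (hL l' hl').mono fun y hy =>
      ⟨hy, (hl'l hy).resolve_left fun h => hal' (h ▸ hy)⟩
  rintro l₁ ⟨hl₁, hx₁, hl₁l⟩ l₂ ⟨hl₂, hx₂, hl₂l⟩ (h : (a ∈ l₁) = (a ∈ l₂))
  by_cases ha₁ : a ∈ l₁
  · exact hlin l₁ hl₁ l₂ hl₂ ⟨a, ⟨ha₁, h ▸ ha₁⟩, x, ⟨hx₁, hx₂⟩, hax⟩
  · exact (heq l₁ hl₁ ha₁ hl₁l).trans (heq l₂ hl₂ (h ▸ ha₁) hl₂l).symm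

theorem IsPolarSpaceOfRank.exists_thick_line {s : Set P} {n : ℕ}
    (hpol : IsPolarSpaceOfRank L s n) (hn : 3 ≤ n) (hsub : IsSubspace L s)
    (hlin : IsPartialLinear L) (hL : ∀ l ∈ L, l.Nontrivial) (h74 : LocallyA74 L) {a : P}
    (ha : a ∈ s) : ∃ l ∈ L, l ⊆ s ∧ a ∈ l ∧ (l \ {a}).Nontrivial := by
  -- Otherwise `a` and a line `l` of a maximal singular subspace through `a` span a plane in which
  -- only two lines pass through a point of `l`.
  by_contra! hthin
  obtain ⟨M, hM, haM⟩ := exists_isMaxSingularIn (L := L) ha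
  have hMs := hM.2.1
  have hMsing := hM.2.2.1
  obtain ⟨x, ⟨hxM, hxa⟩, y, ⟨hyM, hya⟩, hxy⟩ :=
    (hpol.2.2 M hM).1.nontrivial_diff_singleton (by omega) a
  obtain ⟨-, l, hl, hxl, hyl⟩ := (hMsing.2 x hxM y hyM).resolve_left hxy
  have hlM : l ⊆ M := hMsing.1 l hl ⟨x, ⟨hxM, hxl⟩, y, ⟨hyM, hyl⟩, hxy⟩
  have hal : a ∉ l := fun hal => Set.not_nontrivial_iff.2 (hthin l hl (hlM.trans hMs) hal)
    ⟨x, ⟨hxl, hxa⟩, y, ⟨hyl, hya⟩, hxy⟩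
  have haM' : insert a l ⊆ M := Set.insert_subset haM hlM
  have hsubspace : IsSubspace L (insert a l) := by
    intro l' hl' h2
    obtain ⟨w, ⟨hw, hwl'⟩, hwa⟩ := h2.exists_ne a
    have hwl : w ∈ l := hw.resolve_left hwa
    by_cases hal' : a ∈ l'
    · have hl's : l' ⊆ s :=
        hsub l' hl' ⟨a, ⟨ha, hal'⟩, w, ⟨hMs (hlM hwl), hwl'⟩, hwa.symm⟩
      intro z hz
      by_cases hza : z = a
      · exact Or.inl hza
      · exact Or.inr (hthin l' hl' hl's hal' ⟨hz, hza⟩ ⟨hwl', hwa⟩ ▸ hwl)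
    · have h2' : (l' ∩ l).Nontrivial := h2.mono fun z ⟨hz, hzl'⟩ =>
        ⟨hzl', hz.resolve_left fun h => hal' (h ▸ hzl')⟩
      exact (hlin l' hl' l hl h2').le.trans (Set.subset_insert a l)
  have hplane := hlin.isPlane_insert hl (hL l hl) hal
    ⟨hsubspace, fun u hu v hv => hMsing.2 u (haM' hu) v (haM' hv)⟩
  have hlines := hplane.two_lt_encard_lines h74 (Set.mem_insert_of_mem a hxl)
  have hinj := hlin.injOn_mem_of_subset_insert hL hl hal hxl
  rw [← hinj.encard_image] at hlines
  exact hlines.not_ge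
    ((Set.encard_le_encard (Set.subset_univ _)).trans (by simp [Set.encard_univ]))

theorem WHA.exists_mem_perp_of_hexagon (hW : WHA L) {a b c d e f : P}
    (hab : Collin L a b) (hbc : Collin L b c) (hcd : Collin L c d) (hde : Collin L d e)
    (hef : Collin L e f) (hfa : Collin L f a) (hac : c ∉ perp L a) (had : d ∉ perp L a)
    (hae : e ∉ perp L a) (hbd : d ∉ perp L b) (hbe : e ∉ perp L b) (hbf : f ∉ perp L b)
    (hce : e ∉ perp L c) (hcf : f ∉ perp L c) (hdf : f ∉ perp L d) (hpolar : PolarPair L a c) :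
    ∃ w, w ∈ perp L a ∧ w ∈ perp L c ∧ w ∈ perp L e := by
  set v : Fin 6 → P := ![a, b, c, d, e, f]
  have hedge : ∀ i, Collin L (v i) (v (i + 1)) := by
    intro i
    fin_cases i
    exacts [hab, hbc, hcd, hde, hef, hfa]
  have hfar : ∀ i j, j ≠ i → j ≠ i + 1 → j ≠ i - 1 → v j ∉ perp L (v i) := by
    intro i j h0 h1 h2
    fin_cases i <;> fin_cases j <;>
      first
      | exact absurd rfl h0 | exact absurd rfl h1 | exact absurd rfl h2
      | assumption | exact mem_perp_comm.not.1 ‹_›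
  refine hW v (fun i j hij => ?_) hedge
    (fun i j h0 h1 h2 => not_collin_of_not_mem_perp (hfar i j h0 h1 h2)) hpolar
  by_contra hne
  by_cases h1 : j = i + 1
  · exact (hedge i).ne (h1 ▸ hij)
  by_cases h2 : j = i - 1
  · subst h2
    exact (hedge (i - 1)).ne (by rw [sub_add_cancel]; exact hij.symm)
  · exact hfar i j (Ne.symm hne) h1 h2 (Or.inl hij.symm)

theorem WHA.exists_mem_perp_of_perp_inter_eq (hW : WHA L) {s : Set P} {p q p₁ q₁ r r' : P}
    (hps : p ∉ s) (hqs : q ∉ s) (hpq : Collin L p q) (hp : perp L p ∩ s = {p₁})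
    (hq : perp L q ∩ s = {q₁}) (hrs : r ∈ s) (hr's : r' ∈ s) (hp₁r : Collin L p₁ r)
    (hrr' : Collin L r r') (hr'q₁ : Collin L r' q₁) (hr'p₁ : r' ∉ perp L p₁)
    (hq₁r : q₁ ∉ perp L r) (hq₁p₁ : q₁ ∉ perp L p₁) (hpolar : PolarPair L p r) :
    ∃ w, w ∈ perp L p ∧ w ∈ perp L r ∧ w ∈ perp L q₁ := by
  have hp₁ : p₁ ∈ perp L p ∩ s := hp.symm.subset rfl
  have hq₁ : q₁ ∈ perp L q ∩ s := hq.symm.subset rfl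
  have hpp₁ : Collin L p p₁ := collin_of_mem_perp hp₁.1 fun h => hps (h ▸ hp₁.2)
  have hqq₁ : Collin L q q₁ := collin_of_mem_perp hq₁.1 fun h => hqs (h ▸ hq₁.2)
  exact hW.exists_mem_perp_of_hexagon hpp₁ hp₁r hrr' hr'q₁ hqq₁.symm hpq.symm
    (not_mem_perp_of_perp_inter_eq hp hrs hp₁r.ne.symm)
    (not_mem_perp_of_perp_inter_eq hp hr's (ne_of_not_mem_perp hr'p₁))
    (not_mem_perp_of_perp_inter_eq hp hq₁.2 (ne_of_not_mem_perp hq₁p₁)) hr'p₁ hq₁p₁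
    (mem_perp_comm.not.1 (not_mem_perp_of_perp_inter_eq hq hp₁.2 (ne_of_not_mem_perp hq₁p₁).symm))
    hq₁r (mem_perp_comm.not.1 (not_mem_perp_of_perp_inter_eq hq hrs (ne_of_not_mem_perp hq₁r).symm))
    (mem_perp_comm.not.1 (not_mem_perp_of_perp_inter_eq hq hr's hr'q₁.ne)) hpolar

end

theorem statement_10_general {P : Type u} (H : HypH P) (hWHA : WHA H.L)
    (s : Set P) (hs : s ∈ H.S)
    (p q p₁ q₁ : P) (hp : p ∈ GX H.L H.A s)
    (hpq : Collin H.L p q)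
    (hp1 : perp H.L p ∩ s = {p₁}) (hq1 : perp H.L q ∩ s = {q₁}) :
    q₁ ∈ perp H.L p₁ := by
  obtain ⟨hps, p₁', hp1', hpolar, -⟩ := hp
  obtain rfl : p₁ = p₁' := Set.singleton_eq_singleton_iff.1 (hp1.symm.trans hp1')
  have hp₁s : p₁ ∈ s := (hp1.symm.subset rfl).2
  have hq₁s : q₁ ∈ s := (hq1.symm.subset rfl).2
  by_contra hq₁
  have hqs : q ∉ s := fun hqs => hq₁ <|
    Or.inl ((hq1.subset ⟨Or.inl rfl, hqs⟩).symm.trans (hp1.subset ⟨hpq.mem_perp, hqs⟩))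
  have hpol := H.symp_rank4 s hs
  have hsub := H.parapolar.symp_subspace s hs
  obtain ⟨l, hl, hls, hp₁l, hthick⟩ := hpol.exists_thick_line (by norm_num) hsub
    H.parapolar.gamma.1 H.parapolar.line_nontrivial H.locally74 hp₁s
  obtain ⟨r, hrs, r', hr's, hp₁r, hrr', hr'q₁, hr'p₁, hq₁r⟩ :=
    hpol.exists_induced_path hsub hl hls hp₁l hthick hq₁s hq₁
  obtain ⟨w, hwp, hwr, hwq₁⟩ := hWHA.exists_mem_perp_of_perp_inter_eq hps hqs hpq hp1 hq1 hrs
    hr's hp₁r hrr' hr'q₁ hr'p₁ hq₁r hq₁ (hpolar r ⟨hp₁r.mem_perp, hrs⟩ hp₁r.ne.symm)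
  have hws : w ∈ s := (H.parapolar.symp_convex s hs).mem_of_mem_perp hrs hq₁s hq₁r hwr hwq₁
  have hwp₁ : w = p₁ := hp1.subset ⟨hwp, hws⟩
  exact hq₁ (mem_perp_comm.1 (hwp₁ ▸ hwq₁))

/-- claim in Lemma 4.10: if `p, q ∈ G_𝒜(S)` are collinear with
`p^⊥ ∩ S = {p₁}` and `q^⊥ ∩ S = {q₁}`, then `q₁ ∈ p₁^⊥`. -/
theorem statement_10 {P : Type u} (H : HypH P) (hWHA : WHA H.L)
    (s : Set P) (hs : s ∈ H.S)
    (p q p₁ q₁ : P) (hp : p ∈ GX H.L H.A s) (hq : q ∈ GX H.L H.A s)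
    (hpq : Collin H.L p q)
    (hp1 : perp H.L p ∩ s = {p₁}) (hq1 : perp H.L q ∩ s = {q₁}) :
    q₁ ∈ perp H.L p₁ :=
  statement_10_general H hWHA s hs p q p₁ q₁ hp hpq hp1 hq1
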